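/- arXiv:2408.04569 — 3 statements merged into one kernel-verified Lean document; each statement's English description precedes it below -/
import Mathlib

section
/- Let p, q be nonzero polynomials in C[x_1,...,x_d] that are not proportional (there is no α in C with p = α·q). Then for a generic line ℓ(t) = a + t·b in C^d, the univariate polynomials t ↦ p(ℓ(t)) and t ↦ q(ℓ(t)) are not proportional. -/
/-!
Restrict `p` and `q` to the universal line `A + t • B`, whose coefficients `A`, `B` are
indeterminates. The restrictions are proportional at a specialisation `(a, b)` only if every
`2 × 2` minor `Pⱼ Qₖ - Pₖ Qⱼ` of their coefficients vanishes at `(a, b)`; so a nonzero minor is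
the required genericity condition. If all minors vanish identically, then on every line
`ℓ` we get `p(ℓ 0) q(ℓ 1) = p(ℓ 1) q(ℓ 0)`; taking lines from a point `x₀` with `q x₀ ≠ 0`
to an arbitrary `y` gives `p = (p x₀ / q x₀) • q`.
-/

open Polynomial

namespace Polynomial

variable {S : Type*} [CommSemiring S]

theorem eval_mul_eval_comm_of_coeff_mul_comm {P Q : S[X]}
    (h : ∀ j k, P.coeff j * Q.coeff k = P.coeff k * Q.coeff j) (x y : S) :
    P.eval x * Q.eval y = P.eval y * Q.eval x := by
  set N := max P.natDegree Q.natDegree + 1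
  have hP : P.natDegree < N := Nat.lt_succ_of_le (le_max_left _ _)
  have hQ : Q.natDegree < N := Nat.lt_succ_of_le (le_max_right _ _)
  simp only [eval_eq_sum_range' hP, eval_eq_sum_range' hQ, Finset.sum_mul_sum]
  rw [Finset.sum_comm]
  refine Finset.sum_congr rfl fun k _ => Finset.sum_congr rfl fun j _ => ?_
  rw [mul_mul_mul_comm, h j k]
  ring

theorem map_coeff_mul_comm_of_map_eq_smul {K : Type*} [CommSemiring K]
    (f : S →+* K) {P Q : S[X]} {α : K} (h : P.map f = α • Q.map f) (j k : ℕ) :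
    f (P.coeff j * Q.coeff k) = f (P.coeff k * Q.coeff j) := by
  have hcoeff : ∀ n, f (P.coeff n) = α * f (Q.coeff n) := fun n => by
    simpa only [coeff_map, coeff_smul, smul_eq_mul] using congrArg (coeff · n) h
  rw [map_mul, map_mul, hcoeff, hcoeff]
  ring

end Polynomial

namespace MvPolynomial

variable {R σ : Type*} [CommSemiring R]

noncomputable def restrictLine {A : Type*} [CommSemiring A] [Algebra R A] (a b : σ → A) :
    MvPolynomial σ R →ₐ[R] A[X] :=
  aeval fun i => Polynomial.C (a i) + Polynomial.X * Polynomial.C (b i)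

theorem eval_restrictLine (a b : σ → R) (t : R) (p : MvPolynomial σ R) :
    (restrictLine a b p).eval t = eval (a + t • b) p := by
  have h : (Polynomial.aeval t).comp (restrictLine a b) = aeval (a + t • b) := by
    rw [restrictLine, comp_aeval]
    congr 1
    ext i
    simp only [Polynomial.coe_aeval_eq_eval, Polynomial.eval_add, Polynomial.eval_C,
      Polynomial.eval_mul, Polynomial.eval_X, Pi.add_apply, Pi.smul_apply, smul_eq_mul]
  simpa using DFunLike.congr_fun h p

noncomputable def universalLine : MvPolynomial σ R →ₐ[R] (MvPolynomial (σ ⊕ σ) R)[X] :=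
  restrictLine (fun i => (X (Sum.inl i) : MvPolynomial (σ ⊕ σ) R)) (fun i => X (Sum.inr i))

theorem map_universalLine (a b : σ → R) (p : MvPolynomial σ R) :
    (universalLine p).map (eval (Sum.elim a b)) = restrictLine a b p := by
  have h : (Polynomial.mapAlgHom (aeval (Sum.elim a b))).comp universalLine =
      (restrictLine a b : MvPolynomial σ R →ₐ[R] R[X]) := by
    rw [universalLine, restrictLine, comp_aeval, restrictLine]
    congr 1
    ext i
    simp
  simpa [coe_mapAlgHom] using DFunLike.congr_fun h p

theorem exists_eq_smul_of_universalLine_coeff_mul_comm {K : Type*} [Field K] [Infinite K]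
    {p q : MvPolynomial σ K} (hq : q ≠ 0)
    (h : ∀ j k, (universalLine p).coeff j * (universalLine q).coeff k =
      (universalLine p).coeff k * (universalLine q).coeff j) :
    ∃ α : K, p = α • q := by
  obtain ⟨x₀, hx₀⟩ : ∃ x₀, eval x₀ q ≠ 0 := by
    by_contra! hzero
    exact hq (funext fun x => by simp [hzero x])
  have hswap : ∀ y, eval x₀ p * eval y q = eval y p * eval x₀ q := fun y => by
    set f := eval (Sum.elim x₀ (y - x₀))
    have hline : ∀ r, (universalLine r).map f = restrictLine x₀ (y - x₀) r :=
      map_universalLine x₀ (y - x₀)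
    have hminors : ∀ j k, ((universalLine p).map f).coeff j * ((universalLine q).map f).coeff k =
        ((universalLine p).map f).coeff k * ((universalLine q).map f).coeff j := fun j k => by
      simp only [Polynomial.coeff_map, ← map_mul, h j k]
    have := eval_mul_eval_comm_of_coeff_mul_comm hminors 0 1
    simpa only [hline, eval_restrictLine, zero_smul, add_zero, one_smul, add_sub_cancel] using this
  refine ⟨eval x₀ p / eval x₀ q, funext fun y => ?_⟩
  rw [smul_eval, div_mul_eq_mul_div, hswap, mul_div_cancel_right₀ _ hx₀]

end MvPolynomial

theorem generic_line_restriction_nonproportional_general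
    (d : ℕ) (p q : MvPolynomial (Fin d) ℂ)
    (hq : q ≠ 0)
    (hpq : ∀ α : ℂ, p ≠ α • q) :
    ∃ g : MvPolynomial (Fin d ⊕ Fin d) ℂ, g ≠ 0 ∧
      ∀ a b : Fin d → ℂ,
        MvPolynomial.eval (Sum.elim a b) g ≠ 0 →
        ∀ α : ℂ,
          MvPolynomial.aeval (fun i => Polynomial.C (a i) + Polynomial.X * Polynomial.C (b i)) p ≠
            α • MvPolynomial.aeval (fun i => Polynomial.C (a i) + Polynomial.X * Polynomial.C (b i)) q := by
  set P := MvPolynomial.universalLine p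
  set Q := MvPolynomial.universalLine q
  obtain ⟨j, k, hjk⟩ : ∃ j k, P.coeff j * Q.coeff k ≠ P.coeff k * Q.coeff j := by
    by_contra! hminors
    obtain ⟨α, hα⟩ := MvPolynomial.exists_eq_smul_of_universalLine_coeff_mul_comm hq hminors
    exact hpq α hα
  refine ⟨P.coeff j * Q.coeff k - P.coeff k * Q.coeff j, sub_ne_zero.mpr hjk, ?_⟩
  intro a b hg α hprop
  have hmap : P.map (MvPolynomial.eval (Sum.elim a b)) =
      α • Q.map (MvPolynomial.eval (Sum.elim a b)) := by
    rw [MvPolynomial.map_universalLine, MvPolynomial.map_universalLine]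
    exact hprop
  exact hg (by rw [map_sub, sub_eq_zero, map_coeff_mul_comm_of_map_eq_smul _ hmap j k])

/-- For nonzero, non-proportional p, q ∈ ℂ[x_1,...,x_d], a generic line
ℓ(t) = a + t·b yields non-proportional univariate restrictions. "Generic" is expressed
by a nonzero polynomial condition on (a, b) ∈ ℂ^d × ℂ^d. -/
theorem generic_line_restriction_nonproportional
    (d : ℕ) (p q : MvPolynomial (Fin d) ℂ)
    (hp : p ≠ 0) (hq : q ≠ 0)
    (hpq : ∀ α : ℂ, p ≠ α • q) :
    ∃ g : MvPolynomial (Fin d ⊕ Fin d) ℂ, g ≠ 0 ∧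
      ∀ a b : Fin d → ℂ,
        MvPolynomial.eval (Sum.elim a b) g ≠ 0 →
        ∀ α : ℂ,
          MvPolynomial.aeval (fun i => Polynomial.C (a i) + Polynomial.X * Polynomial.C (b i)) p ≠
            α • MvPolynomial.aeval (fun i => Polynomial.C (a i) + Polynomial.X * Polynomial.C (b i)) q :=
  generic_line_restriction_nonproportional_general d p q hq hpq
end

section
/- Let d ≥ 1, r ≥ 2, and suppose a linear combination c_1·x_1^{r·m} + ... + c_d·x_d^{r·m} (with m ≥ 1, c_i ∈ C) is equal to p^r for some polynomial p ∈ C[x_1,...,x_d]. Then at most one c_i is nonzero; that is, p^r is a scalar multiple of some monomial x_j^{r·m} and p is a scalar multiple of x_j^m. -/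
/-!
If two coefficients `c i`, `c j` were nonzero, sending `X i ↦ t`, `X j ↦ 1` and the other
variables to `0` would make `c i * t ^ (r * m) + c j` an `r`-th power in `ℂ[t]`; but that
polynomial is separable, hence squarefree, and not constant. With a single surviving term,
`p ^ r` is associated to `(X j ^ m) ^ r`, so `p` is associated to `X j ^ m` because a UFD is
integrally closed, and the units of a polynomial ring over a field are the nonzero constants.
-/

open Polynomial in
theorem Polynomial.C_mul_X_pow_add_C_ne_pow {K : Type*} [Field K] {a b : K} (ha : a ≠ 0)
    (hb : b ≠ 0) {n r : ℕ} (hn : (n : K) ≠ 0) (hr : 2 ≤ r) (q : K[X]) :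
    C a * X ^ n + C b ≠ q ^ r := by
  have hfactor : C a * X ^ n + C b = C a * (X ^ n - C (-(b / a))) := by
    rw [mul_sub, ← C_mul, mul_neg, mul_div_cancel₀ b ha, map_neg, sub_neg_eq_add]
  have hsq : Squarefree (C a * X ^ n + C b) := by
    rw [hfactor, (associated_unit_mul_left _ _ (isUnit_C.2 ha.isUnit)).squarefree_iff]
    exact (separable_X_pow_sub_C _ hn (neg_ne_zero.2 (div_ne_zero hb ha))).squarefree
  intro h
  rw [h] at hsq
  have hq : IsUnit q := by
    by_contra hq
    have := hsq.eq_zero_or_one_of_pow_of_not_isUnit hq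
    omega
  have := natDegree_eq_zero_of_isUnit (h ▸ hq.pow r)
  rw [natDegree_add_C, natDegree_C_mul_X_pow n a ha] at this
  exact hn (by simp [this])

namespace MvPolynomial

variable {R K σ : Type*}

theorem aeval_sum_C_mul_X_pow_of_ne [CommSemiring R] [Fintype σ] [DecidableEq σ]
    (c : σ → R) {n : ℕ} (hn : n ≠ 0) {i j : σ} (hij : i ≠ j) :
    aeval (fun k => if k = i then Polynomial.X else if k = j then 1 else 0)
        (∑ k, C (c k) * X k ^ n) =
      Polynomial.C (c i) * Polynomial.X ^ n + Polynomial.C (c j) := by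
  rw [map_sum, Fintype.sum_eq_add i j hij (fun k hk => by simp [hk.1, hk.2, hn])]
  simp [hij.symm]

theorem eq_of_sum_C_mul_X_pow_eq_pow [Field K] [Fintype σ] {c : σ → K} {n r : ℕ}
    (hn : (n : K) ≠ 0) (hr : 2 ≤ r) {p : MvPolynomial σ K}
    (h : ∑ k, C (c k) * X k ^ n = p ^ r) {i j : σ} (hi : c i ≠ 0) (hj : c j ≠ 0) : i = j := by
  classical
  by_contra hij
  have hn' : n ≠ 0 := by rintro rfl; simp at hn
  have hspec := congrArg
    (aeval fun k => if k = i then (Polynomial.X : Polynomial K) else if k = j then 1 else 0) h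
  rw [aeval_sum_C_mul_X_pow_of_ne c hn' hij, map_pow] at hspec
  exact Polynomial.C_mul_X_pow_add_C_ne_pow hi hj hn hr _ hspec

theorem exists_eq_C_mul_X_pow_of_pow_eq [Field K] {r m : ℕ} (hr : r ≠ 0) {a : K} {j : σ}
    {p : MvPolynomial σ K} (h : p ^ r = C a * X j ^ (r * m)) : ∃ l, p = C l * X j ^ m := by
  by_cases ha : a = 0
  · refine ⟨0, ?_⟩
    simpa [ha, hr] using h
  have hassoc : Associated (X j ^ m) p := by
    rw [← Associated.pow_iff hr, ← pow_mul, mul_comm m, h]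
    exact (associated_unit_mul_left _ _ ((Ne.isUnit ha).map C)).symm
  obtain ⟨u, hu⟩ := hassoc
  obtain ⟨l, -, hl⟩ := isUnit_iff_eq_C_of_isReduced.1 u.isUnit
  exact ⟨l, by rw [← hu, hl, mul_comm]⟩

end MvPolynomial

open MvPolynomial in
/-- For d ≥ 1, r ≥ 2, m ≥ 1, if c_1 x_1^{rm} + ... + c_d x_d^{rm} = p^r
for some polynomial p, then at most one c_i is nonzero: p^r is a scalar multiple of
some x_j^{rm} and p is a scalar multiple of x_j^m. -/
theorem pure_power_combination_rth_power
    (d r m : ℕ) (hd : 1 ≤ d) (hr : 2 ≤ r) (hm : 1 ≤ m)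
    (c : Fin d → ℂ) (p : MvPolynomial (Fin d) ℂ)
    (h : (∑ i, MvPolynomial.C (c i) * (MvPolynomial.X i) ^ (r * m)) = p ^ r) :
    ∃ j : Fin d, (∀ i, i ≠ j → c i = 0) ∧
      ∃ l : ℂ, p = MvPolynomial.C l * (MvPolynomial.X j) ^ m := by
  have hrm : ((r * m : ℕ) : ℂ) ≠ 0 := Nat.cast_ne_zero.2 (by positivity)
  obtain ⟨j, hj⟩ : ∃ j, ∀ i, i ≠ j → c i = 0 := by
    by_cases hc : ∃ j, c j ≠ 0
    · obtain ⟨j, hcj⟩ := hc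
      exact ⟨j, fun i hij => by_contra fun hci =>
        hij (eq_of_sum_C_mul_X_pow_eq_pow hrm hr h hci hcj)⟩
    · push Not at hc
      exact ⟨⟨0, hd⟩, fun i _ => hc i⟩
  refine ⟨j, hj, exists_eq_C_mul_X_pow_of_pow_eq (a := c j) (show r ≠ 0 by omega) ?_⟩
  rw [← h, Finset.sum_eq_single j (fun i _ hij => by simp [hj i hij]) (by simp)]
end

section
/- Let d = (d_0, ..., d_L) be an equi-width architecture with d := d_0 = ... = d_L ≥ 2, L ≥ 2, and r ≥ 2. If weight matrices W_1,...,W_L ∈ C^{d×d} satisfy (W_L σ_{L−1} ⋯ σ_1 W_1)(x) = (x_1^{r^{L−1}}, ..., x_d^{r^{L−1}}), then every W_i is a scaled permutation matrix (a product of a permutation matrix and an invertible diagonal matrix). -/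
/-- Polynomial neural network with activation degree r, architecture `d 0, ..., d L`. -/
def pnn {R : Type*} [CommSemiring R] (r : ℕ) (d : ℕ → ℕ)
    (W : ∀ i : ℕ, Matrix (Fin (d (i+1))) (Fin (d i)) R) :
    (L : ℕ) → ((Fin (d 0) → R) → (Fin (d L) → R))
  | 0 => fun x => x
  | 1 => fun x => (W 0).mulVec x
  | (L+2) => fun x => (W (L+1)).mulVec (fun i => (pnn r d W (L+1) x) i ^ r)

/-!
Peel off the first layer: the network is `x ↦ G ((W₀ x) ^ r)` with `G` the network of the
remaining layers, and it equals `x ↦ x ^ N` with `N = r ^ (L - 1) ≠ 0`. Then `W₀` is injective,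
since `x ^ N = 0` forces `x = 0`. If some column `j` of `W₀` had nonzero entries in two rows
`i ≠ i'`, solve `W₀ a = ω · W₀ eⱼ`, where `ω` is `1` except for a nontrivial `r`-th root of
unity `ζ` in row `i`. Both sides have the same `r`-th powers, so `a ^ N = eⱼ ^ N`; hence `a` is
a multiple of `eⱼ`, and comparing rows `i` and `i'` gives `ζ = 1`. So `W₀ = P D` is a scaled
permutation. Since `(P D x) ^ r = P Dʳ (x ^ r)` and every vector is an `r`-th power, `G ∘ P Dʳ`
is a network of depth `L - 1` computing `x ↦ x ^ (N / r)`, and induction applies.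
-/

open Matrix

namespace Matrix

variable {n R K : Type*} [Fintype n] [DecidableEq n]

def IsScaledPerm [Semiring R] (A : Matrix n n R) : Prop :=
  ∃ (π : Equiv.Perm n) (e : n → R), (∀ j, e j ≠ 0) ∧ A = π.permMatrix R * diagonal e

section Semiring

variable [Semiring R]

theorem permMatrix_mul_diagonal_apply (π : Equiv.Perm n) (e : n → R) (i j : n) :
    (π.permMatrix R * diagonal e) i j = if π i = j then e j else 0 := by
  simp [mul_diagonal, PEquiv.toMatrix_apply]

theorem isScaledPerm_iff {A : Matrix n n R} :
    A.IsScaledPerm ↔ ∃ ρ : Equiv.Perm n, ∀ i j, A i j ≠ 0 ↔ i = ρ j := by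
  constructor
  · rintro ⟨π, e, he, rfl⟩
    refine ⟨π.symm, fun i j => ?_⟩
    rw [permMatrix_mul_diagonal_apply, Equiv.eq_symm_apply]
    split_ifs with h <;> simp [h, he]
  · rintro ⟨ρ, hρ⟩
    refine ⟨ρ.symm, fun j => A (ρ j) j, fun j => (hρ _ _).2 rfl, ?_⟩
    ext i j
    rw [permMatrix_mul_diagonal_apply]
    by_cases h : i = ρ j
    · simp [h]
    · rw [if_neg (by rwa [Equiv.symm_apply_eq]), not_not.1 (mt (hρ i j).1 h)]

theorem isScaledPerm_mul_right_iff [NoZeroDivisors R] {A B : Matrix n n R}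
    (hB : B.IsScaledPerm) : (A * B).IsScaledPerm ↔ A.IsScaledPerm := by
  obtain ⟨σ, hσ⟩ := isScaledPerm_iff.1 hB
  have hAB : ∀ i j, (A * B) i j ≠ 0 ↔ A i (σ j) ≠ 0 := by
    intro i j
    rw [mul_apply, Finset.sum_eq_single (σ j)
      (fun k _ hk => by rw [not_not.1 (mt (hσ k j).1 hk), mul_zero]) (by simp)]
    simp [(hσ _ _).2 rfl]
  simp only [isScaledPerm_iff, hAB]
  constructor
  · rintro ⟨ρ, hρ⟩
    exact ⟨σ.symm.trans ρ, fun i k => by simpa using hρ i (σ.symm k)⟩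
  · rintro ⟨ρ, hρ⟩
    exact ⟨σ.trans ρ, fun i j => hρ i (σ j)⟩

end Semiring

theorem permMatrix_mul_diagonal_mulVec [CommRing R] (π : Equiv.Perm n) (e x : n → R) :
    (π.permMatrix R * diagonal e) *ᵥ x = (e * x) ∘ π := by
  ext
  simp [← mulVec_mulVec, permMatrix_mulVec, mulVec_diagonal]

theorem permMatrix_mul_diagonal_mulVec_pow [CommRing R] (π : Equiv.Perm n) (e x : n → R)
    (r : ℕ) : ((π.permMatrix R * diagonal e) *ᵥ x) ^ r
      = (π.permMatrix R * diagonal (e ^ r)) *ᵥ x ^ r := by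
  simp only [permMatrix_mul_diagonal_mulVec]
  ext
  simp [mul_pow]

variable [Field K]

theorem isScaledPerm_of_isUnit {A : Matrix n n K} (hA : IsUnit A)
    (hcol : ∀ i i' j, A i j ≠ 0 → A i' j ≠ 0 → i = i') : A.IsScaledPerm := by
  have hcol_ne : ∀ j, ∃ i, A i j ≠ 0 := by
    intro j
    by_contra! h
    have : A *ᵥ Pi.single j 1 = A *ᵥ 0 := by
      ext i
      simp [h]
    simpa using congrFun (mulVec_injective_iff_isUnit.2 hA this) j
  choose ρ hρ using hcol_ne
  have hsupp : ∀ i j, A i j ≠ 0 ↔ i = ρ j :=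
    fun i j => ⟨fun h => hcol _ _ _ h (hρ j), fun h => h ▸ hρ j⟩
  have hsurj : Function.Surjective ρ := by
    intro i
    obtain ⟨v, hv⟩ := mulVec_surjective_iff_isUnit.2 hA (Pi.single i 1)
    have : ∑ j, A i j * v j = 1 := by
      simpa [mulVec, dotProduct] using congrFun hv i
    obtain ⟨j, -, hj⟩ := Finset.exists_ne_zero_of_sum_ne_zero (this ▸ one_ne_zero)
    exact ⟨j, ((hsupp i j).1 (left_ne_zero_of_mul hj)).symm⟩
  exact isScaledPerm_iff.2
    ⟨Equiv.ofBijective ρ ⟨Finite.injective_iff_surjective.2 hsurj, hsurj⟩, hsupp⟩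

section PowFactor

variable {A : Matrix n n K} {G : (n → K) → n → K} {r N : ℕ}

theorem isUnit_of_pow_factor (hN : N ≠ 0) (hG : ∀ x, G ((A *ᵥ x) ^ r) = x ^ N) :
    IsUnit A := by
  rw [← mulVec_injective_iff_isUnit, ← coe_mulVecLin, injective_iff_map_eq_zero]
  intro v hv
  have : v ^ N = 0 ^ N := by
    rw [← hG, ← hG, mulVec_zero, ← coe_mulVecLin, hv]
  funext i
  simpa [hN] using congrFun this i

theorem eq_of_col_ne_zero_of_pow_factor {ζ : K} (hζ : ζ ^ r = 1) (hζ1 : ζ ≠ 1) (hN : N ≠ 0)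
    (hG : ∀ x, G ((A *ᵥ x) ^ r) = x ^ N) {i i' j : n} (hi : A i j ≠ 0) (hi' : A i' j ≠ 0) :
    i = i' := by
  by_contra hne
  set ω : n → K := Function.update 1 i ζ
  have hω : ω ^ r = 1 := by
    ext m
    rcases eq_or_ne m i with rfl | hm <;> simp [ω, *]
  obtain ⟨a, ha⟩ := mulVec_surjective_iff_isUnit.2 (isUnit_of_pow_factor hN hG) (ω * A.col j)
  have hpow : a ^ N = Pi.single j 1 ^ N := by
    rw [← hG, ← hG, ha, mul_pow, hω, one_mul, mulVec_single_one]
  have ha_single : a = Pi.single j (a j) := by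
    ext m
    rcases eq_or_ne m j with rfl | hm
    · simp
    · have := congrFun hpow m
      simp_all
  have hcol : ∀ m, A m j * a j = ω m * A m j := by
    intro m
    have := congrFun ha m
    rw [ha_single] at this
    simpa [mul_comm] using this
  have h1 : a j = ζ := mul_left_cancel₀ hi (by simpa [ω, mul_comm] using hcol i)
  have h2 : a j = 1 := mul_left_cancel₀ hi'
    (by simpa [ω, Function.update_of_ne (Ne.symm hne)] using hcol i')
  exact hζ1 (h1.symm.trans h2)

theorem isScaledPerm_of_pow_factor {ζ : K} (hζ : ζ ^ r = 1) (hζ1 : ζ ≠ 1) (hN : N ≠ 0)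
    (hG : ∀ x, G ((A *ᵥ x) ^ r) = x ^ N) : A.IsScaledPerm :=
  isScaledPerm_of_isUnit (isUnit_of_pow_factor hN hG)
    fun _ _ _ => eq_of_col_ne_zero_of_pow_factor hζ hζ1 hN hG

end PowFactor

end Matrix

section Network

variable {R : Type*} [CommSemiring R] {r : ℕ}

theorem pnn_add_two_eq_tail (d : ℕ → ℕ)
    (W : ∀ i : ℕ, Matrix (Fin (d (i + 1))) (Fin (d i)) R) (M : ℕ) (x : Fin (d 0) → R) :
    pnn r d W (M + 2) x
      = pnn r (fun i => d (i + 1)) (fun i => W (i + 1)) (M + 1) ((W 0 *ᵥ x) ^ r) := by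
  induction M with
  | zero => rfl
  | succ M ih => exact congrArg (W (M + 2)).mulVec (congrArg (· ^ r) ih)

theorem pnn_mulVec {d : ℕ} (W : ℕ → Matrix (Fin d) (Fin d) R) (B : Matrix (Fin d) (Fin d) R)
    (M : ℕ) (x : Fin d → R) :
    pnn r (fun _ => d) W (M + 1) (B *ᵥ x)
      = pnn r (fun _ => d) (Function.update W 0 (W 0 * B)) (M + 1) x := by
  induction M with
  | zero => simp [pnn, mulVec_mulVec]
  | succ M ih =>
    simp only [pnn] at ih ⊢
    rw [Function.update_of_ne (by omega), ih]

end Network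

theorem isScaledPerm_of_pnn_eq_pow {K : Type*} [Field K] [IsAlgClosed K] {d r : ℕ}
    (hr : 0 < r) {ζ : K} (hζ : ζ ^ r = 1) (hζ1 : ζ ≠ 1) :
    ∀ (L : ℕ) (W : ℕ → Matrix (Fin d) (Fin d) K),
      (∀ x, pnn r (fun _ => d) W L x = x ^ r ^ (L - 1)) → ∀ i < L, (W i).IsScaledPerm
  | 0, _, _, i, hi => absurd hi (Nat.not_lt_zero i)
  | 1, W, hW, 0, _ => by
    have : W 0 = 1 := ext fun a b => by
      simpa [pnn, Pi.single_apply, one_apply, eq_comm] using congrFun (hW (Pi.single b 1)) a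
    exact this ▸ ⟨1, 1, fun _ => one_ne_zero, by simp⟩
  | k + 2, W, hW, i, hi => by
    let G := pnn r (fun _ => d) (fun i => W (i + 1)) (k + 1)
    have hG : ∀ x, G ((W 0 *ᵥ x) ^ r) = x ^ r ^ (k + 1) :=
      fun x => (pnn_add_two_eq_tail (r := r) (fun _ => d) W k x).symm.trans (hW x)
    obtain ⟨π, e, he, hW₀⟩ := isScaledPerm_of_pow_factor hζ hζ1 (pow_ne_zero _ hr.ne') hG
    set M := π.permMatrix K * diagonal (e ^ r)
    have hM : M.IsScaledPerm := ⟨π, e ^ r, fun j => pow_ne_zero r (he j), rfl⟩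
    have hGM : ∀ y,
        pnn r (fun _ => d) (Function.update (fun i => W (i + 1)) 0 (W 1 * M)) (k + 1) y
          = y ^ r ^ k := by
      intro y
      choose x hx using fun i => IsAlgClosed.exists_pow_nat_eq (y i) hr
      obtain rfl : x ^ r = y := funext hx
      rw [← pnn_mulVec, ← permMatrix_mul_diagonal_mulVec_pow, ← hW₀, ← pow_mul, ← pow_succ']
      exact hG x
    have IH := isScaledPerm_of_pnn_eq_pow hr hζ hζ1 (k + 1) _ hGM
    match i with
    | 0 => exact ⟨π, e, he, hW₀⟩
    | 1 => simpa [isScaledPerm_mul_right_iff hM] using IH 0 (by omega)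
    | j + 2 => simpa using IH (j + 1) (by omega)

theorem fiber_weights_are_scaled_permutations_general
    (d L r : ℕ) (hr : 2 ≤ r)
    (W : ℕ → Matrix (Fin d) (Fin d) ℂ)
    (hnet : ∀ x : Fin d → ℂ,
        pnn (R := ℂ) r (fun _ => d) W L x = fun i => (x i) ^ (r ^ (L - 1))) :
    ∀ i, i < L →
      ∃ (π : Equiv.Perm (Fin d)) (e : Fin d → ℂ), (∀ j, e j ≠ 0) ∧
        W i = Equiv.Perm.permMatrix ℂ π * Matrix.diagonal e := by
  have hζ := Complex.isPrimitiveRoot_exp r (by omega)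
  exact isScaledPerm_of_pnn_eq_pow (by omega) hζ.pow_eq_one (hζ.ne_one (by omega)) L W hnet

/-- For an equi-width architecture with d ≥ 2, L ≥ 2, r ≥ 2, if the
network computed by W_1,...,W_L equals x ↦ (x_1^{r^{L−1}},...,x_d^{r^{L−1}}), then
every W_i is a scaled permutation matrix. -/
theorem fiber_weights_are_scaled_permutations
    (d L r : ℕ) (hd : 2 ≤ d) (hL : 2 ≤ L) (hr : 2 ≤ r)
    (W : ℕ → Matrix (Fin d) (Fin d) ℂ)
    (hnet : ∀ x : Fin d → ℂ,
        pnn (R := ℂ) r (fun _ => d) W L x = fun i => (x i) ^ (r ^ (L - 1))) :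
    ∀ i, i < L →
      ∃ (π : Equiv.Perm (Fin d)) (e : Fin d → ℂ), (∀ j, e j ≠ 0) ∧
        W i = Equiv.Perm.permMatrix ℂ π * Matrix.diagonal e :=
  fiber_weights_are_scaled_permutations_general d L r hr W hnet
end
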